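/- Let n and t be positive integers, and let I be an integer with ⌊(n+1)/2⌋ ≤ I ≤ n. Then C(t, 2I−n) = Σ_{i=⌊(n+1)/2⌋}^{n} (−1)^{I−i}·C(t, I−i)·C(t+2i−n−1, 2i−n). -/

import Mathlib

/-!
With `K = 2I - n` and `j = I - i`, the claim reads
`C(t, K) = ∑ⱼ (-1)^j C(t, j) C(t + K - 2j - 1, K - 2j)`, the coefficient of `x^K` in
`(1 - x²)^t (1 - x)^(-t) = (1 + x)^t`. We prove it for all integers `t` and `K` by Pascal's rule
instead: up to a telescoping sum, the right-hand side satisfies the recurrence of `C(t, K)` in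
`(t, K)`, and it agrees with `C(0, K)` at `t = 0`, so by induction on `K` the difference of the
two sides is `1`-periodic in `t` and vanishes at `0`.
-/

/-- The generalized binomial coefficient `C(a,b)` for integers `a`, `b`:
`C(a,b) = 0` if `b < 0`, and `C(a,b) = a(a-1)⋯(a-b+1)/b!` if `b ≥ 0`. -/
noncomputable def binom (a b : ℤ) : ℤ := if b < 0 then 0 else Ring.choose a b.toNat

open Function

lemma finsum_sub_apply_sub_eq_zero {α G : Type*} [AddGroup α] [AddCommGroup G] {h : α → G}
    (hh : HasFiniteSupport h) (c : α) : ∑ᶠ j, (h j - h (j - c)) = 0 := by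
  have hshift : ∑ᶠ j, h (j - c) = ∑ᶠ j, h j := finsum_comp_equiv (Equiv.subRight c)
  rw [finsum_sub_distrib hh (by fun_prop (disch := exact sub_left_injective)), hshift, sub_self]

lemma binom_of_neg (a : ℤ) {b : ℤ} (h : b < 0) : binom a b = 0 := if_pos h

lemma binom_natCast_right (a : ℤ) (k : ℕ) : binom a k = Ring.choose a k := by
  simp [binom]

lemma binom_zero_right (a : ℤ) : binom a 0 = 1 := by
  simpa using binom_natCast_right a 0

lemma binom_eq_zero_of_lt {a b : ℤ} (ha : 0 ≤ a) (hab : a < b) : binom a b = 0 := by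
  lift a to ℕ using ha
  lift b to ℕ using by omega
  rw [binom_natCast_right, Ring.choose_natCast, Nat.choose_eq_zero_of_lt (by omega), Nat.cast_zero]

lemma binom_add_one_left (a k : ℤ) : binom (a + 1) k = binom a (k - 1) + binom a k := by
  rcases lt_or_ge k 0 with hk | hk
  · rw [binom_of_neg _ hk, binom_of_neg _ hk, binom_of_neg _ (by omega), add_zero]
  lift k to ℕ using hk
  cases k with
  | zero => simp [binom_zero_right, binom_of_neg]
  | succ k =>
    push_cast
    rw [add_sub_cancel_right, ← Nat.cast_succ, binom_natCast_right, binom_natCast_right,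
      binom_natCast_right, Ring.choose_succ_succ]

/-- The identity concerns `a = t + K - 1`; keeping `a` free makes the telescoping correction in
`binomConvTerm_add_one` a term of the same shape. -/
noncomputable def binomConvTerm (t a K j : ℤ) : ℤ :=
  (j.negOnePow : ℤ) * binom t j * binom (a - 2 * j) (K - 2 * j)

lemma support_binomConvTerm_subset (t a K : ℤ) :
    support (binomConvTerm t a K) ⊆ {j | 0 ≤ j ∧ 2 * j ≤ K} := by
  intro j h
  simp only [mem_support, binomConvTerm, ne_eq, mul_eq_zero, not_or] at h
  obtain ⟨⟨-, hj⟩, hjK⟩ := h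
  exact ⟨not_lt.1 fun hj₀ => hj (binom_of_neg t hj₀),
    by simpa using mt (binom_of_neg (a - 2 * j)) hjK⟩

@[fun_prop]
lemma hasFiniteSupport_binomConvTerm (t a K : ℤ) : HasFiniteSupport (binomConvTerm t a K) :=
  (Set.finite_Icc 0 K).subset fun j hj => by
    obtain ⟨hj₀, hjK⟩ := support_binomConvTerm_subset t a K hj
    exact ⟨hj₀, by omega⟩

/-- Pascal's rule on `C(t + 1, j)` and twice on the last factor; the part coming from
`C(t, j - 1)` is minus the shift of the extra term from the last factor. -/
lemma binomConvTerm_add_one (t a K j : ℤ) :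
    binomConvTerm (t + 1) (a + 1) (K + 1) j = binomConvTerm t a (K + 1) j
      + binomConvTerm t (a - 1) K j
      + (binomConvTerm t (a - 1) (K - 1) j - binomConvTerm t (a - 1) (K - 1) (j - 1)) := by
  have h₁ := binom_add_one_left (a - 2 * j) (K + 1 - 2 * j)
  have h₂ := binom_add_one_left (a - 1 - 2 * j) (K - 2 * j)
  simp only [binomConvTerm, binom_add_one_left t j, Int.negOnePow_sub, Int.negOnePow_one]
  ring_nf at h₁ h₂ ⊢
  rw [h₁, h₂]
  push_cast
  ring

lemma finsum_binomConvTerm_add_one (t a K : ℤ) :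
    ∑ᶠ j, binomConvTerm (t + 1) (a + 1) (K + 1) j
      = ∑ᶠ j, binomConvTerm t a (K + 1) j + ∑ᶠ j, binomConvTerm t (a - 1) K j := by
  simp_rw [binomConvTerm_add_one]
  rw [finsum_add_distrib (by fun_prop) (by fun_prop (disch := exact sub_left_injective)),
    finsum_add_distrib (by fun_prop) (by fun_prop),
    finsum_sub_apply_sub_eq_zero (hasFiniteSupport_binomConvTerm ..), add_zero]

lemma finsum_binomConvTerm_of_neg (t a : ℤ) {K : ℤ} (hK : K < 0) :
    ∑ᶠ j, binomConvTerm t a K j = 0 :=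
  finsum_eq_zero_of_forall_eq_zero fun j => by
    by_contra h
    obtain ⟨hj₀, hjK⟩ := support_binomConvTerm_subset t a K h
    omega

lemma finsum_binomConvTerm_zero_left (a K : ℤ) : ∑ᶠ j, binomConvTerm 0 a K j = binom a K := by
  rw [finsum_eq_single _ 0 fun j hj => ?_]
  · simp [binomConvTerm, binom_zero_right]
  rcases hj.lt_or_gt with hj | hj
  · rw [binomConvTerm, binom_of_neg 0 hj, mul_zero, zero_mul]
  · rw [binomConvTerm, binom_eq_zero_of_lt le_rfl hj, mul_zero, zero_mul]

theorem finsum_binomConvTerm_eq_binom (t K : ℤ) :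
    ∑ᶠ j, binomConvTerm t (t + K - 1) K j = binom t K := by
  rcases lt_or_ge K 0 with hK | hK
  · rw [finsum_binomConvTerm_of_neg _ _ hK, binom_of_neg _ hK]
  induction K, hK using Int.leInduction generalizing t with
  | base =>
    rw [finsum_eq_single _ 0 fun j hj => ?_]
    · simp [binomConvTerm, binom_zero_right]
    by_contra h
    obtain ⟨hj₀, hjK⟩ := support_binomConvTerm_subset _ _ _ h
    omega
  | succ K hK ih =>
    set D : ℤ → ℤ := fun t => ∑ᶠ j, binomConvTerm t (t + (K + 1) - 1) (K + 1) j - binom t (K + 1)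
    have hD : Periodic D 1 := fun t => by
      simp only [D]
      rw [show t + 1 + (K + 1) - 1 = t + (K + 1) - 1 + 1 by ring, finsum_binomConvTerm_add_one,
        binom_add_one_left, add_sub_cancel_right, show t + (K + 1) - 1 - 1 = t + K - 1 by ring, ih]
      ring
    have hD₀ : D 0 = 0 := by
      simp only [D]
      rw [finsum_binomConvTerm_zero_left, binom_eq_zero_of_lt (by omega) (by omega),
        binom_eq_zero_of_lt le_rfl (by omega), sub_zero]
    have hDt := hD.int_mul_eq t
    rw [mul_one, hD₀] at hDt
    simpa [D, sub_eq_zero] using hDt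

theorem binom_sum_identity_general (n t I : ℤ) (hI₂ : I ≤ n) :
    binom t (2 * I - n) =
      ∑ i ∈ Finset.Icc ((n + 1) / 2) n,
        ((I - i).negOnePow : ℤ) * binom t (I - i) * binom (t + 2 * i - n - 1) (2 * i - n) := by
  have hsummand : ∀ i, binomConvTerm t (t + (2 * I - n) - 1) (2 * I - n) (I - i) =
      ((I - i).negOnePow : ℤ) * binom t (I - i) * binom (t + 2 * i - n - 1) (2 * i - n) := by
    intro i
    unfold binomConvTerm
    congr 2 <;> ring
  calc binom t (2 * I - n)
      = ∑ᶠ j, binomConvTerm t (t + (2 * I - n) - 1) (2 * I - n) j :=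
        (finsum_binomConvTerm_eq_binom t _).symm
    _ = ∑ᶠ i, binomConvTerm t (t + (2 * I - n) - 1) (2 * I - n) (I - i) :=
        (finsum_comp_equiv (Equiv.subLeft I)).symm
    _ = ∑ i ∈ Finset.Icc ((n + 1) / 2) n,
          binomConvTerm t (t + (2 * I - n) - 1) (2 * I - n) (I - i) := by
        refine finsum_eq_sum_of_support_subset _ fun i hi => ?_
        obtain ⟨hi₀, hiK⟩ := support_binomConvTerm_subset _ _ _ hi
        simp only [Finset.coe_Icc, Set.mem_Icc]
        omega
    _ = _ := Finset.sum_congr rfl fun i _ => hsummand i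

theorem binom_sum_identity (n t I : ℤ) (hn : 0 < n) (ht : 0 < t)
    (hI₁ : (n + 1) / 2 ≤ I) (hI₂ : I ≤ n) :
    binom t (2 * I - n) =
      ∑ i ∈ Finset.Icc ((n + 1) / 2) n,
        ((I - i).negOnePow : ℤ) * binom t (I - i) * binom (t + 2 * i - n - 1) (2 * i - n) :=
  binom_sum_identity_general n t I hI₂
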